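/- Let p = Σ_{k=0}^r p_k T_k ∈ ℝ[t] be a univariate polynomial belonging to the truncated pre-ordering 𝒯(1−t, 1+t)_r. Then the kernel K_p(x,y) := Σ_{k=0}^r p_k T_k(x) T_k(y) belongs to the bidegree-truncated pre-ordering 𝒯(1±x; 1±y)_{r,r}. -/

import Mathlib

open MvPolynomial Polynomial


open MvPolynomial

/-- Truncated pre-ordering generated by univariate polynomials `g i`, with degree
bound `r`. -/
def truncPreUniv {ι : Type} [Fintype ι] [DecidableEq ι]
    (g : ι → Polynomial ℝ) (r : ℕ) : Set (Polynomial ℝ) :=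
  {p | ∃ s : Finset ι → Polynomial ℝ,
    (∀ I, IsSumSq (s I)) ∧
    (∀ I : Finset ι, (s I * ∏ i ∈ I, g i).natDegree ≤ r) ∧
    p = ∑ I : Finset ι, s I * ∏ i ∈ I, g i}

/-- The generators `1 ± v`, indexed by a variable together with a sign. -/
noncomputable def pmGen {σ : Type} (v : σ × Bool) : MvPolynomial σ ℝ :=
  if v.2 then 1 + MvPolynomial.X v.1 else 1 - MvPolynomial.X v.1

/-- The bidegree-truncated pre-ordering `𝒯(1±x; 1±y)_{r₁,r₂}` in the two variables
`x = X 0`, `y = X 1`. -/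
noncomputable def biPre1 (r₁ r₂ : ℕ) : Set (MvPolynomial (Fin 2) ℝ) :=
  {p | ∃ s : Finset (Fin 2 × Bool) → MvPolynomial (Fin 2) ℝ,
    (∀ J, IsSumSq (s J)) ∧
    (∀ J : Finset (Fin 2 × Bool),
      degreeOf 0 (s J * ∏ v ∈ J, pmGen v) ≤ r₁ ∧
      degreeOf 1 (s J * ∏ v ∈ J, pmGen v) ≤ r₂) ∧
    p = ∑ J : Finset (Fin 2 × Bool), s J * ∏ v ∈ J, pmGen v}

/-- The kernel `K_p(x,y) = ∑_k p_k T_k(x) T_k(y)` associated to a univariate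
polynomial with Chebyshev coefficients `c`. -/
noncomputable def chebKernel (c : ℕ →₀ ℝ) : MvPolynomial (Fin 2) ℝ :=
  c.sum fun k a => MvPolynomial.C a *
    (Polynomial.aeval (MvPolynomial.X 0) (Polynomial.Chebyshev.T ℝ k) *
     Polynomial.aeval (MvPolynomial.X 1) (Polynomial.Chebyshev.T ℝ k))


noncomputable section CK
namespace CK

abbrev R2 := MvPolynomial (Fin 2) ℝ

def xx : R2 := MvPolynomial.X 0
def yy : R2 := MvPolynomial.X 1
def gxm : R2 := 1 - xx
def gxp : R2 := 1 + xx
def gym : R2 := 1 - yy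
def gyp : R2 := 1 + yy
def dd : R2 := gxm * gxp * (gym * gyp)
def uu : R2 := xx * yy

abbrev Mat := Matrix (Fin 2) (Fin 2) R2

def za : Mat := !![uu, dd; 1, uu]

lemma za00 : za 0 0 = uu := rfl
lemma za01 : za 0 1 = dd := rfl
lemma za10 : za 1 0 = 1 := rfl
lemma za11 : za 1 1 = uu := rfl

lemma shape_pow (n : ℕ) : (za ^ n) 1 1 = (za ^ n) 0 0 ∧ (za ^ n) 0 1 = dd * (za ^ n) 1 0 := by
  induction n with
  | zero => simp [Matrix.one_apply]
  | succ n ih =>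
      rw [pow_succ]
      simp only [Matrix.mul_apply, Fin.sum_univ_two, za00, za01, za10, za11]
      constructor
      · rw [ih.1, ih.2]; ring
      · rw [ih.1, ih.2]; ring

def PP (h : ℝ[X]) : R2 := (Polynomial.aeval za h) 0 0
def QQ (h : ℝ[X]) : R2 := (Polynomial.aeval za h) 1 0

lemma aeval_za_eq (h : ℝ[X]) : Polynomial.aeval za h =
    ∑ i ∈ Finset.range (h.natDegree + 1), h.coeff i • za ^ i :=
  Polynomial.aeval_eq_sum_range (x := za) (p := h)

lemma shape (h : ℝ[X]) :
    (Polynomial.aeval za h) 1 1 = PP h ∧ (Polynomial.aeval za h) 0 1 = dd * QQ h := by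
  rw [PP, QQ, aeval_za_eq]
  simp only [Matrix.sum_apply, Matrix.smul_apply, Finset.mul_sum]
  constructor
  · exact Finset.sum_congr rfl fun i _ => by rw [(shape_pow i).1]
  · exact Finset.sum_congr rfl fun i _ => by
      rw [(shape_pow i).2]
      simp [MvPolynomial.smul_eq_C_mul]
      ring

lemma PP_mul (f g : ℝ[X]) : PP (f * g) = PP f * PP g + dd * (QQ f * QQ g) := by
  have hf := shape f
  have hg := shape g
  simp only [PP, QQ, map_mul, Matrix.mul_apply, Fin.sum_univ_two] at *
  rw [hf.2]
  ring

lemma QQ_mul (f g : ℝ[X]) : QQ (f * g) = PP f * QQ g + QQ f * PP g := by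
  have hf := shape f
  have hg := shape g
  simp only [PP, QQ, map_mul, Matrix.mul_apply, Fin.sum_univ_two] at *
  rw [hf.1]
  ring

lemma PP_add (f g : ℝ[X]) : PP (f + g) = PP f + PP g := by
  simp [PP, map_add, Matrix.add_apply]

lemma QQ_add (f g : ℝ[X]) : QQ (f + g) = QQ f + QQ g := by
  simp [QQ, map_add, Matrix.add_apply]

lemma PP_sub (f g : ℝ[X]) : PP (f - g) = PP f - PP g := by
  simp [PP, map_sub, Matrix.sub_apply]

lemma QQ_sub (f g : ℝ[X]) : QQ (f - g) = QQ f - QQ g := by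
  simp [QQ, map_sub, Matrix.sub_apply]

lemma PP_C (a : ℝ) : PP (Polynomial.C a) = MvPolynomial.C a := by
  simp [PP, Polynomial.aeval_C, Matrix.algebraMap_matrix_apply]

lemma QQ_C (a : ℝ) : QQ (Polynomial.C a) = 0 := by
  simp [QQ, Polynomial.aeval_C, Matrix.algebraMap_matrix_apply]

lemma PP_one : PP 1 = 1 := by simpa using PP_C 1
lemma QQ_one : QQ 1 = 0 := by simpa using QQ_C 1
lemma PP_zero : PP 0 = 0 := by simpa using PP_C 0
lemma QQ_zero : QQ 0 = 0 := by simpa using QQ_C 0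

lemma PP_X : PP Polynomial.X = uu := by simp [PP]; rfl
lemma QQ_X : QQ Polynomial.X = 1 := by simp [QQ]; rfl

lemma PP_smul (a : ℝ) (f : ℝ[X]) : PP (a • f) = MvPolynomial.C a * PP f := by
  simp [PP, map_smul, Matrix.smul_apply, MvPolynomial.smul_eq_C_mul]

end CK
end CK

noncomputable section CK2
namespace CK
open Polynomial.Chebyshev

def tx (k : ℤ) : R2 := Polynomial.aeval xx (T ℝ k)
def ty (k : ℤ) : R2 := Polynomial.aeval yy (T ℝ k)
def ux (k : ℤ) : R2 := Polynomial.aeval xx (U ℝ k)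
def uy (k : ℤ) : R2 := Polynomial.aeval yy (U ℝ k)

lemma PP_X_mul (f : ℝ[X]) : PP (Polynomial.X * f) = uu * PP f + dd * QQ f := by
  rw [PP_mul, PP_X, QQ_X]; ring

lemma QQ_X_mul (f : ℝ[X]) : QQ (Polynomial.X * f) = uu * QQ f + PP f := by
  rw [QQ_mul, PP_X, QQ_X]; ring

-- (ii)  T n = X * T (n+1) + (1 - X^2) * U n
lemma T_eq_X_mul_T_add_pol_U (n : ℤ) :
    T ℝ n = Polynomial.X * T ℝ (n + 1) + (1 - Polynomial.X ^ 2) * U ℝ n := by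
  linear_combination T_add_two ℝ n - T_eq_X_mul_T_sub_pol_U ℝ n

-- (iv)  U (n-1) = X * U n - T (n+1)
lemma U_sub_one_eq (n : ℤ) :
    U ℝ (n - 1) = Polynomial.X * U ℝ n - T ℝ (n + 1) := by
  have h1 := U_add_two ℝ (n - 1)
  rw [show n - 1 + 2 = n + 1 by ring, show n - 1 + 1 = n by ring] at h1
  have h2 := U_eq_X_mul_U_add_T ℝ n
  linear_combination h1 - h2

lemma cheb (k : ℕ) : PP (T ℝ k) = tx k * ty k ∧ QQ (T ℝ k) = ux (k - 1) * uy (k - 1) := by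
  induction k using Nat.twoStepInduction with
  | zero =>
      constructor
      · simpa [T_zero, tx, ty] using PP_one
      · simp [T_zero, QQ_one, ux, uy, U_neg_one]
  | one =>
      constructor
      · simpa [T_one, tx, ty, uu] using PP_X
      · simp [T_one, QQ_X, ux, uy, U_zero]
  | more k ih1 ih2 =>
      have hcast : ((k + 2 : ℕ) : ℤ) = (k : ℤ) + 2 := by push_cast; ring
      have hrec : T ℝ ((k + 2 : ℕ) : ℤ) = 2 * (Polynomial.X * T ℝ ((k:ℤ) + 1)) - T ℝ (k : ℤ) := by
        rw [hcast, T_add_two]; ring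
      have hcast1 : ((k + 1 : ℕ) : ℤ) = (k : ℤ) + 1 := by push_cast; ring
      have e1 : PP (T ℝ ((k:ℤ) + 1)) = tx ((k:ℤ)+1) * ty ((k:ℤ)+1) := by
        rw [← hcast1]; exact ih2.1
      have e2 : QQ (T ℝ ((k:ℤ) + 1)) = ux (k:ℤ) * uy (k:ℤ) := by
        have := ih2.2
        rw [hcast1] at this
        simpa using this
      have e3 : PP (T ℝ (k:ℤ)) = tx (k:ℤ) * ty (k:ℤ) := ih1.1
      have e4 : QQ (T ℝ (k:ℤ)) = ux ((k:ℤ)-1) * uy ((k:ℤ)-1) := ih1.2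
      -- aeval'd identities
      have X1 : tx ((k:ℤ)+2) = xx * tx ((k:ℤ)+1) - (1 - xx^2) * ux (k:ℤ) := by
        have := congrArg (Polynomial.aeval xx) (T_eq_X_mul_T_sub_pol_U ℝ (k:ℤ))
        simpa [tx, ux, map_sub, map_add, map_mul, map_one, map_pow] using this
      have Y1 : ty ((k:ℤ)+2) = yy * ty ((k:ℤ)+1) - (1 - yy^2) * uy (k:ℤ) := by
        have := congrArg (Polynomial.aeval yy) (T_eq_X_mul_T_sub_pol_U ℝ (k:ℤ))
        simpa [ty, uy, map_sub, map_add, map_mul, map_one, map_pow] using this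
      have X2 : tx (k:ℤ) = xx * tx ((k:ℤ)+1) + (1 - xx^2) * ux (k:ℤ) := by
        have := congrArg (Polynomial.aeval xx) (T_eq_X_mul_T_add_pol_U (k:ℤ))
        simpa [tx, ux, map_sub, map_add, map_mul, map_one, map_pow] using this
      have Y2 : ty (k:ℤ) = yy * ty ((k:ℤ)+1) + (1 - yy^2) * uy (k:ℤ) := by
        have := congrArg (Polynomial.aeval yy) (T_eq_X_mul_T_add_pol_U (k:ℤ))
        simpa [ty, uy, map_sub, map_add, map_mul, map_one, map_pow] using this
      have X3 : ux ((k:ℤ)+1) = xx * ux (k:ℤ) + tx ((k:ℤ)+1) := by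
        have := congrArg (Polynomial.aeval xx) (U_eq_X_mul_U_add_T ℝ (k:ℤ))
        simpa [tx, ux, map_add, map_mul] using this
      have Y3 : uy ((k:ℤ)+1) = yy * uy (k:ℤ) + ty ((k:ℤ)+1) := by
        have := congrArg (Polynomial.aeval yy) (U_eq_X_mul_U_add_T ℝ (k:ℤ))
        simpa [ty, uy, map_add, map_mul] using this
      have X4 : ux ((k:ℤ)-1) = xx * ux (k:ℤ) - tx ((k:ℤ)+1) := by
        have := congrArg (Polynomial.aeval xx) (U_sub_one_eq (k:ℤ))
        simpa [tx, ux, map_sub, map_mul] using this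
      have Y4 : uy ((k:ℤ)-1) = yy * uy (k:ℤ) - ty ((k:ℤ)+1) := by
        have := congrArg (Polynomial.aeval yy) (U_sub_one_eq (k:ℤ))
        simpa [ty, uy, map_sub, map_mul] using this
      have hdd : dd = (1 - xx^2) * (1 - yy^2) := by
        simp only [dd, gxm, gxp, gym, gyp]; ring
      constructor
      · rw [hrec, two_mul, PP_sub, PP_add, PP_X_mul, e1, e2, e3, hcast, X1, Y1, X2, Y2, hdd, uu]
        ring
      · have hq : QQ (T ℝ ((k + 2 : ℕ) : ℤ)) = 2 * (uu * (ux (k:ℤ) * uy (k:ℤ)) + tx ((k:ℤ)+1) * ty ((k:ℤ)+1)) - ux ((k:ℤ)-1) * uy ((k:ℤ)-1) := by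
          rw [hrec, two_mul, QQ_sub, QQ_add, QQ_X_mul, e1, e2, e4]
          ring
        rw [hq, hcast]
        have hcast2 : ((k:ℤ) + 2 - 1) = (k:ℤ) + 1 := by ring
        rw [hcast2, X3, Y3, X4, Y4, uu]
        ring

end CK
end CK2

section SOSuniv

lemma sos_eval_nonneg {S : Polynomial ℝ} (hS : IsSumSq S) (t : ℝ) : 0 ≤ S.eval t := by
  induction hS with
  | zero => simp
  | @sq_add a S' _ ih =>
      simp only [Polynomial.eval_add, Polynomial.eval_mul]
      nlinarith [mul_self_nonneg (a.eval t)]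

lemma coeff_max_pos {p q : Polynomial ℝ} (hp : 0 < p.coeff p.natDegree)
    (hq : 0 < q.coeff q.natDegree) :
    0 < (p + q).coeff (max p.natDegree q.natDegree) := by
  rw [Polynomial.coeff_add]
  rcases le_total p.natDegree q.natDegree with h | h
  · rw [max_eq_right h]
    rcases eq_or_lt_of_le h with he | hl
    · rw [← he]
      have h0 : 0 ≤ q.coeff p.natDegree := by rw [he]; exact hq.le
      linarith
    · have h0 : p.coeff q.natDegree = 0 := Polynomial.coeff_eq_zero_of_natDegree_lt hl
      rw [h0]; linarith
  · rw [max_eq_left h]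
    rcases eq_or_lt_of_le h with he | hl
    · rw [← he]
      have h0 : 0 ≤ p.coeff q.natDegree := by rw [he]; exact hp.le
      linarith
    · have h0 : q.coeff p.natDegree = 0 := Polynomial.coeff_eq_zero_of_natDegree_lt hl
      rw [h0]; linarith

lemma natDegree_add_sos {p q : Polynomial ℝ} (hp : 0 < p.coeff p.natDegree)
    (hq : 0 < q.coeff q.natDegree) :
    (p + q).natDegree = max p.natDegree q.natDegree :=
  le_antisymm (Polynomial.natDegree_add_le p q)
    (Polynomial.le_natDegree_of_ne_zero (coeff_max_pos hp hq).ne')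

lemma sos_lead {S : Polynomial ℝ} (hS : IsSumSq S) :
    S = 0 ∨ 0 < S.coeff S.natDegree := by
  induction hS with
  | zero => left; rfl
  | @sq_add a S' hS' ih =>
      by_cases ha : a = 0
      · rcases ih with h | h
        · left; simp [ha, h]
        · right; simpa [ha] using h
      · have hlc : 0 < (a * a).coeff (a * a).natDegree := by
          have : (a * a).coeff (a * a).natDegree = a.leadingCoeff * a.leadingCoeff := by
            rw [Polynomial.coeff_natDegree, Polynomial.leadingCoeff_mul]
          rw [this]
          exact mul_self_pos.mpr (Polynomial.leadingCoeff_ne_zero.mpr ha)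
        rcases ih with h | h
        · right; simpa [h] using hlc
        · right
          have h2 := coeff_max_pos hlc h
          rw [← natDegree_add_sos hlc h] at h2
          exact h2

lemma sos_natDegree_left {p q : Polynomial ℝ} (hp : IsSumSq p) (hq : IsSumSq q) :
    p.natDegree ≤ (p + q).natDegree := by
  rcases sos_lead hp with h | h
  · simp [h]
  rcases sos_lead hq with h' | h'
  · simp [h']
  rw [natDegree_add_sos h h']
  exact le_max_left _ _

lemma sos_natDegree_right {p q : Polynomial ℝ} (hp : IsSumSq p) (hq : IsSumSq q) :
    q.natDegree ≤ (p + q).natDegree := by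
  rcases sos_lead hp with h | h
  · simp [h]
  rcases sos_lead hq with h' | h'
  · simp [h']
  rw [natDegree_add_sos h h']
  exact le_max_right _ _

lemma sos_sq_add_eq_zero {a S : Polynomial ℝ} (hS : IsSumSq S) (h0 : a * a + S = 0) :
    a = 0 ∧ S = 0 := by
  have he : ∀ t : ℝ, a.eval t * a.eval t + S.eval t = 0 := by
    intro t
    rw [← Polynomial.eval_mul, ← Polynomial.eval_add, h0, Polynomial.eval_zero]
  have ha : a = 0 := by
    apply Polynomial.funext
    intro t
    have h1 := sos_eval_nonneg hS t
    have h2 := he t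
    have : a.eval t = 0 := by nlinarith [mul_self_nonneg (a.eval t)]
    simpa using this
  refine ⟨ha, ?_⟩
  rw [ha] at h0
  simpa using h0

end SOSuniv

noncomputable section CK3
namespace CK

-- degree bound helpers
lemma dof_sum_le {α : Type*} (s : Finset α) (f : α → R2) (i : Fin 2) (K : ℕ)
    (h : ∀ a ∈ s, degreeOf i (f a) ≤ K) : degreeOf i (∑ a ∈ s, f a) ≤ K := by
  classical
  induction s using Finset.induction_on with
  | empty => simp [degreeOf_zero]
  | insert a s' hni ih =>
      rw [Finset.sum_insert hni]
      refine le_trans (degreeOf_add_le _ _ _) ?_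
      exact max_le (h a (Finset.mem_insert_self a s'))
        (ih fun b hb => h b (Finset.mem_insert_of_mem hb))

lemma dmul {i : Fin 2} {p q : R2} {a b c : ℕ} (hp : degreeOf i p ≤ a)
    (hq : degreeOf i q ≤ b) (h : a + b ≤ c) : degreeOf i (p * q) ≤ c :=
  le_trans (degreeOf_mul_le i p q) (le_trans (add_le_add hp hq) h)

lemma dadd {i : Fin 2} {p q : R2} {c : ℕ} (hp : degreeOf i p ≤ c)
    (hq : degreeOf i q ≤ c) : degreeOf i (p + q) ≤ c :=
  le_trans (degreeOf_add_le i p q) (max_le hp hq)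

lemma dsub {i : Fin 2} {p q : R2} {c : ℕ} (hp : degreeOf i p ≤ c)
    (hq : degreeOf i q ≤ c) : degreeOf i (p - q) ≤ c :=
  le_trans (degreeOf_sub_le i p q) (max_le hp hq)

lemma dsq {i : Fin 2} {p : R2} {a c : ℕ} (hp : degreeOf i p ≤ a) (h : a + a ≤ c) :
    degreeOf i (p ^ 2) ≤ c := by
  rw [pow_two]; exact dmul hp hp h

lemma dof_one {i : Fin 2} : degreeOf i (1 : R2) = 0 := by
  rw [show (1 : R2) = MvPolynomial.C 1 by simp]; exact degreeOf_C _ _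

lemma dof_xx : ∀ i : Fin 2, degreeOf i xx ≤ 1 := by
  intro i; rw [xx, degreeOf_X]; split <;> omega

lemma dof_yy : ∀ i : Fin 2, degreeOf i yy ≤ 1 := by
  intro i; rw [yy, degreeOf_X]; split <;> omega

lemma dof_xx1 : degreeOf 1 xx = 0 := by rw [xx, degreeOf_X]; simp
lemma dof_yy0 : degreeOf 0 yy = 0 := by rw [yy, degreeOf_X]; simp

lemma dof_gxm0 : degreeOf 0 gxm ≤ 1 := dsub (by rw [dof_one]; omega) (by rw [xx, degreeOf_X]; simp)
lemma dof_gxp0 : degreeOf 0 gxp ≤ 1 := dadd (by rw [dof_one]; omega) (by rw [xx, degreeOf_X]; simp)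
lemma dof_gym0 : degreeOf 0 gym ≤ 0 := dsub (by rw [dof_one]) (by rw [dof_yy0])
lemma dof_gyp0 : degreeOf 0 gyp ≤ 0 := dadd (by rw [dof_one]) (by rw [dof_yy0])
lemma dof_gxm1 : degreeOf 1 gxm ≤ 0 := dsub (by rw [dof_one]) (by rw [dof_xx1])
lemma dof_gxp1 : degreeOf 1 gxp ≤ 0 := dadd (by rw [dof_one]) (by rw [dof_xx1])
lemma dof_gym1 : degreeOf 1 gym ≤ 1 := dsub (by rw [dof_one]; omega) (by rw [yy, degreeOf_X]; simp)
lemma dof_gyp1 : degreeOf 1 gyp ≤ 1 := dadd (by rw [dof_one]; omega) (by rw [yy, degreeOf_X]; simp)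

lemma fin2cases (i : Fin 2) : i = 0 ∨ i = 1 := by revert i; decide

lemma dof_uu : ∀ i : Fin 2, degreeOf i uu ≤ 1 := by
  intro i
  rcases fin2cases i with rfl | rfl
  · exact dmul (p := xx) (q := yy) (dof_xx 0) (le_of_eq dof_yy0) (by omega)
  · exact dmul (p := xx) (q := yy) (le_of_eq dof_xx1) (dof_yy 1) (by omega)

lemma dof_dd : ∀ i : Fin 2, degreeOf i dd ≤ 2 := by
  intro i
  rcases fin2cases i with rfl | rfl
  · exact dmul (dmul dof_gxm0 dof_gxp0 (le_refl 2)) (dmul dof_gym0 dof_gyp0 (le_refl 0)) (by omega)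
  · exact dmul (dmul dof_gxm1 dof_gxp1 (le_refl 0)) (dmul dof_gym1 dof_gyp1 (le_refl 2)) (by omega)

lemma za_pow_deg (n : ℕ) (i : Fin 2) :
    degreeOf i ((za ^ n) 0 0) ≤ n ∧ degreeOf i ((za ^ n) 1 0) ≤ n - 1 := by
  induction n with
  | zero => simp [Matrix.one_apply, dof_one, degreeOf_zero]
  | succ n ih =>
      rcases Nat.eq_zero_or_pos n with hn | hn
      · subst hn
        constructor
        · simpa [za00] using dof_uu i
        · simp [za10, pow_one, dof_one]
      · have h01 : (za ^ n) 0 1 = dd * (za ^ n) 1 0 := (shape_pow n).2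
        have h11 : (za ^ n) 1 1 = (za ^ n) 0 0 := (shape_pow n).1
        rw [pow_succ]
        constructor
        · rw [Matrix.mul_apply, Fin.sum_univ_two, za00, za10, h01]
          refine dadd (dmul ih.1 (dof_uu i) (by omega)) ?_
          rw [mul_one]
          exact dmul (dof_dd i) ih.2 (by omega)
        · rw [Matrix.mul_apply, Fin.sum_univ_two, za00, za10, h11, mul_one]
          refine dadd (dmul ih.2 (dof_uu i) (by omega)) ?_
          exact le_trans ih.1 (by omega)

lemma PP_deg (h : ℝ[X]) (i : Fin 2) : degreeOf i (PP h) ≤ h.natDegree := by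
  rw [PP, aeval_za_eq, Matrix.sum_apply]
  refine dof_sum_le _ _ _ _ ?_
  intro a ha
  rw [Matrix.smul_apply, MvPolynomial.smul_eq_C_mul]
  refine le_trans (degreeOf_C_mul_le _ _ _) (le_trans (za_pow_deg a i).1 ?_)
  exact Nat.le_of_lt_succ (Finset.mem_range.mp ha)

lemma QQ_deg (h : ℝ[X]) (i : Fin 2) : degreeOf i (QQ h) ≤ h.natDegree - 1 := by
  rw [QQ, aeval_za_eq, Matrix.sum_apply]
  refine dof_sum_le _ _ _ _ ?_
  intro a ha
  rw [Matrix.smul_apply, MvPolynomial.smul_eq_C_mul]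
  refine le_trans (degreeOf_C_mul_le _ _ _) (le_trans (za_pow_deg a i).2 ?_)
  have := Nat.le_of_lt_succ (Finset.mem_range.mp ha)
  omega

lemma QQ_eq_zero {h : ℝ[X]} (h0 : h.natDegree = 0) : QQ h = 0 := by
  obtain ⟨a, rfl⟩ := Polynomial.natDegree_eq_zero.mp h0
  exact QQ_C a

lemma dof_G_mul_QQ (h : ℝ[X]) (i : Fin 2) (k : ℕ) (G : R2)
    (hG : degreeOf i G ≤ k + 1) : degreeOf i (G * QQ h) ≤ k + h.natDegree := by
  rcases Nat.eq_zero_or_pos h.natDegree with h0 | h0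
  · rw [QQ_eq_zero h0, mul_zero, degreeOf_zero]; omega
  · refine dmul hG (QQ_deg h i) ?_
    omega

lemma dof_B2_mul (h : ℝ[X]) (i : Fin 2) (k : ℕ) (G : R2)
    (hG : degreeOf i G ≤ k + 2) : degreeOf i ((QQ h) ^ 2 * G) ≤ k + 2 * h.natDegree := by
  rcases Nat.eq_zero_or_pos h.natDegree with h0 | h0
  · rw [QQ_eq_zero h0]
    simp [degreeOf_zero, zero_pow]
  · refine dmul (dsq (QQ_deg h i) (le_refl _)) hG ?_
    omega

end CK
end CK3

noncomputable section CK4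
namespace CK

lemma pm0f : pmGen ((0 : Fin 2), false) = gxm := by simp [pmGen, gxm, xx]
lemma pm0t : pmGen ((0 : Fin 2), true) = gxp := by simp [pmGen, gxp, xx]
lemma pm1f : pmGen ((1 : Fin 2), false) = gym := by simp [pmGen, gym, yy]
lemma pm1t : pmGen ((1 : Fin 2), true) = gyp := by simp [pmGen, gyp, yy]

lemma isSumSq_sq (W : R2) : IsSumSq (W ^ 2) := by
  have := IsSumSq.sq_add W IsSumSq.zero
  simpa [pow_two] using this

lemma isSumSq_half_sq (W : R2) : IsSumSq (MvPolynomial.C (1/2 : ℝ) * W ^ 2) := by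
  have e2 : Real.sqrt (1/2) * Real.sqrt (1/2) = 1/2 := Real.mul_self_sqrt (by norm_num)
  have key : MvPolynomial.C (1/2 : ℝ) * W ^ 2
      = (MvPolynomial.C (Real.sqrt (1/2)) * W) * (MvPolynomial.C (Real.sqrt (1/2)) * W) + 0 := by
    rw [add_zero]
    rw [show (MvPolynomial.C (Real.sqrt (1/2)) * W) * (MvPolynomial.C (Real.sqrt (1/2)) * W)
        = MvPolynomial.C (Real.sqrt (1/2) * Real.sqrt (1/2)) * W ^ 2 by
      rw [map_mul]; ring]
    rw [e2]
  rw [key]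
  exact IsSumSq.sq_add _ IsSumSq.zero

lemma biPre1_zero (r₁ r₂ : ℕ) : (0 : R2) ∈ biPre1 r₁ r₂ := by
  refine ⟨fun _ => 0, fun _ => IsSumSq.zero, fun J => ?_, by simp⟩
  simp [degreeOf_zero]

lemma biPre1_add {r₁ r₂ : ℕ} {p q : R2} (hp : p ∈ biPre1 r₁ r₂) (hq : q ∈ biPre1 r₁ r₂) :
    p + q ∈ biPre1 r₁ r₂ := by
  obtain ⟨s, hs1, hs2, hs3⟩ := hp
  obtain ⟨t, ht1, ht2, ht3⟩ := hq
  refine ⟨fun J => s J + t J, fun J => (hs1 J).add (ht1 J), fun J => ?_, ?_⟩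
  · rw [add_mul]
    exact ⟨dadd (hs2 J).1 (ht2 J).1, dadd (hs2 J).2 (ht2 J).2⟩
  · rw [hs3, ht3, ← Finset.sum_add_distrib]
    exact Finset.sum_congr rfl fun J _ => by rw [add_mul]

lemma biPre1_sum {r₁ r₂ : ℕ} {α : Type*} (s : Finset α) (f : α → R2)
    (h : ∀ a ∈ s, f a ∈ biPre1 r₁ r₂) : (∑ a ∈ s, f a) ∈ biPre1 r₁ r₂ := by
  classical
  induction s using Finset.induction_on with
  | empty => simpa using biPre1_zero r₁ r₂
  | insert a s' hni ih =>
      rw [Finset.sum_insert hni]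
      exact biPre1_add (h a (Finset.mem_insert_self a s'))
        (ih fun b hb => h b (Finset.mem_insert_of_mem hb))

lemma biPre1_single {r₁ r₂ : ℕ} (σ : R2) (J₀ : Finset (Fin 2 × Bool)) (hσ : IsSumSq σ)
    (h0 : degreeOf 0 (σ * ∏ v ∈ J₀, pmGen v) ≤ r₁)
    (h1 : degreeOf 1 (σ * ∏ v ∈ J₀, pmGen v) ≤ r₂) :
    σ * ∏ v ∈ J₀, pmGen v ∈ biPre1 r₁ r₂ := by
  classical
  refine ⟨fun J => if J = J₀ then σ else 0, fun J => ?_, fun J => ?_, ?_⟩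
  · by_cases hJ : J = J₀ <;> simp [hJ, hσ, IsSumSq.zero]
  · by_cases hJ : J = J₀
    · subst hJ; exact ⟨by simpa using h0, by simpa using h1⟩
    · simp [hJ, degreeOf_zero]
  · have : ∀ J ∈ (Finset.univ : Finset (Finset (Fin 2 × Bool))),
        (if J = J₀ then σ else 0) * ∏ v ∈ J, pmGen v
          = if J = J₀ then σ * ∏ v ∈ J, pmGen v else 0 := by
      intro J _
      by_cases hJ : J = J₀ <;> simp [hJ]
    rw [Finset.sum_congr rfl this, Finset.sum_ite_eq' Finset.univ J₀
      (fun J => σ * ∏ v ∈ J, pmGen v)]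
    simp

end CK
end CK4

noncomputable section CK5
namespace CK

def Jmp : Finset (Fin 2 × Bool) := {((0 : Fin 2), false), ((1 : Fin 2), true)}
def Jpm : Finset (Fin 2 × Bool) := {((0 : Fin 2), true), ((1 : Fin 2), false)}
def Jmm : Finset (Fin 2 × Bool) := {((0 : Fin 2), false), ((1 : Fin 2), false)}
def Jpp : Finset (Fin 2 × Bool) := {((0 : Fin 2), true), ((1 : Fin 2), true)}
def Jx : Finset (Fin 2 × Bool) := {((0 : Fin 2), false), ((0 : Fin 2), true)}
def Jy : Finset (Fin 2 × Bool) := {((1 : Fin 2), false), ((1 : Fin 2), true)}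
def J4 : Finset (Fin 2 × Bool) :=
  {((0 : Fin 2), false), ((0 : Fin 2), true), ((1 : Fin 2), false), ((1 : Fin 2), true)}

lemma prodJmp : ∏ v ∈ Jmp, pmGen v = gxm * gyp := by
  rw [Jmp, Finset.prod_insert (by decide), Finset.prod_singleton, pm0f, pm1t]

lemma prodJpm : ∏ v ∈ Jpm, pmGen v = gxp * gym := by
  rw [Jpm, Finset.prod_insert (by decide), Finset.prod_singleton, pm0t, pm1f]

lemma prodJmm : ∏ v ∈ Jmm, pmGen v = gxm * gym := by
  rw [Jmm, Finset.prod_insert (by decide), Finset.prod_singleton, pm0f, pm1f]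

lemma prodJpp : ∏ v ∈ Jpp, pmGen v = gxp * gyp := by
  rw [Jpp, Finset.prod_insert (by decide), Finset.prod_singleton, pm0t, pm1t]

lemma prodJx : ∏ v ∈ Jx, pmGen v = gxm * gxp := by
  rw [Jx, Finset.prod_insert (by decide), Finset.prod_singleton, pm0f, pm0t]

lemma prodJy : ∏ v ∈ Jy, pmGen v = gym * gyp := by
  rw [Jy, Finset.prod_insert (by decide), Finset.prod_singleton, pm1f, pm1t]

lemma prodJ4 : ∏ v ∈ J4, pmGen v = gxm * (gxp * (gym * gyp)) := by
  rw [J4, Finset.prod_insert (by decide), Finset.prod_insert (by decide),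
    Finset.prod_insert (by decide), Finset.prod_singleton, pm0f, pm0t, pm1f, pm1t]

lemma two_mul_C_half : (2 : R2) * MvPolynomial.C (1/2 : ℝ) = 1 := by
  have h2 : MvPolynomial.C (2 : ℝ) = (2 : R2) := map_ofNat _ 2
  rw [← h2, ← map_mul]
  norm_num

lemma dof_J4prod0 : degreeOf 0 (gxm * (gxp * (gym * gyp))) ≤ 0 + 2 :=
  dmul dof_gxm0 (dmul dof_gxp0 (dmul dof_gym0 dof_gyp0 (le_refl 0)) (le_refl 1)) (by omega)

lemma dof_J4prod1 : degreeOf 1 (gxm * (gxp * (gym * gyp))) ≤ 0 + 2 :=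
  dmul dof_gxm1 (show degreeOf 1 (gxp * (gym * gyp)) ≤ 2 from
    dmul dof_gxp1 (dmul dof_gym1 dof_gyp1 (le_refl 2)) (by omega)) (by omega)

lemma dof_mp0 : degreeOf 0 (gxp * gym) ≤ 0 + 1 := dmul dof_gxp0 dof_gym0 (by omega)
lemma dof_mp1 : degreeOf 1 (gxp * gym) ≤ 0 + 1 := dmul dof_gxp1 dof_gym1 (by omega)
lemma dof_pm0 : degreeOf 0 (gxm * gyp) ≤ 0 + 1 := dmul dof_gxm0 dof_gyp0 (by omega)
lemma dof_pm1 : degreeOf 1 (gxm * gyp) ≤ 0 + 1 := dmul dof_gxm1 dof_gyp1 (by omega)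
lemma dof_mm0 : degreeOf 0 (gxm * gym) ≤ 0 + 1 := dmul dof_gxm0 dof_gym0 (by omega)
lemma dof_mm1 : degreeOf 1 (gxm * gym) ≤ 0 + 1 := dmul dof_gxm1 dof_gym1 (by omega)
lemma dof_pp0 : degreeOf 0 (gxp * gyp) ≤ 0 + 1 := dmul dof_gxp0 dof_gyp0 (by omega)
lemma dof_pp1 : degreeOf 1 (gxp * gyp) ≤ 0 + 1 := dmul dof_gxp1 dof_gyp1 (by omega)

lemma caseEmpty (r : ℕ) (h : ℝ[X]) (hr : 2 * h.natDegree ≤ r) :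
    PP (h * h) ∈ biPre1 r r := by
  have hid : PP (h * h)
      = (PP h) ^ 2 * ∏ v ∈ (∅ : Finset (Fin 2 × Bool)), pmGen v
        + (QQ h) ^ 2 * ∏ v ∈ J4, pmGen v := by
    rw [PP_mul, Finset.prod_empty, prodJ4, dd]
    ring
  rw [hid]
  refine biPre1_add
    (biPre1_single _ _ (isSumSq_sq _) ?_ ?_)
    (biPre1_single _ _ (isSumSq_sq _) ?_ ?_)
  · rw [Finset.prod_empty, mul_one]
    exact dsq (PP_deg h 0) (by omega)
  · rw [Finset.prod_empty, mul_one]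
    exact dsq (PP_deg h 1) (by omega)
  · rw [prodJ4]
    exact le_trans (dof_B2_mul h 0 0 _ dof_J4prod0) (by omega)
  · rw [prodJ4]
    exact le_trans (dof_B2_mul h 1 0 _ dof_J4prod1) (by omega)

lemma case0 (r : ℕ) (h : ℝ[X]) (hr : 2 * h.natDegree + 1 ≤ r) :
    PP (h * h * (1 - Polynomial.X)) ∈ biPre1 r r := by
  have hE : PP (h * h * (1 - Polynomial.X))
      = (1 - uu) * ((PP h) ^ 2 + dd * (QQ h) ^ 2) - dd * (2 * (PP h * QQ h)) := by
    rw [PP_mul, PP_mul h h, QQ_mul h h, PP_sub, QQ_sub, PP_one, QQ_one, PP_X, QQ_X]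
    ring
  have hid : PP (h * h * (1 - Polynomial.X))
      = (MvPolynomial.C (1/2 : ℝ) * (PP h - gxp * gym * QQ h) ^ 2) * ∏ v ∈ Jmp, pmGen v
        + (MvPolynomial.C (1/2 : ℝ) * (PP h - gxm * gyp * QQ h) ^ 2) * ∏ v ∈ Jpm, pmGen v := by
    rw [hE, prodJmp, prodJpm]
    simp only [dd, uu, gxm, gxp, gym, gyp, xx, yy]
    linear_combination
      (-((1 - MvPolynomial.X 0 * MvPolynomial.X 1) * ((PP h) ^ 2
          + ((1 - MvPolynomial.X 0) * (1 + MvPolynomial.X 0)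
            * ((1 - MvPolynomial.X 1) * (1 + MvPolynomial.X 1))) * (QQ h) ^ 2)
        - ((1 - MvPolynomial.X 0) * (1 + MvPolynomial.X 0)
            * ((1 - MvPolynomial.X 1) * (1 + MvPolynomial.X 1)))
          * (2 * (PP h * QQ h)))) * two_mul_C_half
  rw [hid]
  refine biPre1_add
    (biPre1_single _ _ (isSumSq_half_sq _) ?_ ?_)
    (biPre1_single _ _ (isSumSq_half_sq _) ?_ ?_)
  · rw [prodJmp]
    exact dmul (le_trans (degreeOf_C_mul_le _ _ _) (dsq (dsub ((PP_deg h 0).trans_eq (zero_add _).symm)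
      (dof_G_mul_QQ h 0 0 _ dof_mp0)) (le_refl _))) dof_pm0 (by omega)
  · rw [prodJmp]
    exact dmul (le_trans (degreeOf_C_mul_le _ _ _) (dsq (dsub ((PP_deg h 1).trans_eq (zero_add _).symm)
      (dof_G_mul_QQ h 1 0 _ dof_mp1)) (le_refl _))) dof_pm1 (by omega)
  · rw [prodJpm]
    exact dmul (le_trans (degreeOf_C_mul_le _ _ _) (dsq (dsub ((PP_deg h 0).trans_eq (zero_add _).symm)
      (dof_G_mul_QQ h 0 0 _ dof_pm0)) (le_refl _))) dof_mp0 (by omega)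
  · rw [prodJpm]
    exact dmul (le_trans (degreeOf_C_mul_le _ _ _) (dsq (dsub ((PP_deg h 1).trans_eq (zero_add _).symm)
      (dof_G_mul_QQ h 1 0 _ dof_pm1)) (le_refl _))) dof_mp1 (by omega)

end CK
end CK5

noncomputable section CK6
namespace CK

lemma case1 (r : ℕ) (h : ℝ[X]) (hr : 2 * h.natDegree + 1 ≤ r) :
    PP (h * h * (1 + Polynomial.X)) ∈ biPre1 r r := by
  have hE : PP (h * h * (1 + Polynomial.X))
      = (1 + uu) * ((PP h) ^ 2 + dd * (QQ h) ^ 2) + dd * (2 * (PP h * QQ h)) := by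
    rw [PP_mul, PP_mul h h, QQ_mul h h, PP_add, QQ_add, PP_one, QQ_one, PP_X, QQ_X]
    ring
  have hid : PP (h * h * (1 + Polynomial.X))
      = (MvPolynomial.C (1/2 : ℝ) * (PP h + gxp * gyp * QQ h) ^ 2) * ∏ v ∈ Jmm, pmGen v
        + (MvPolynomial.C (1/2 : ℝ) * (PP h + gxm * gym * QQ h) ^ 2) * ∏ v ∈ Jpp, pmGen v := by
    rw [hE, prodJmm, prodJpp]
    simp only [dd, uu, gxm, gxp, gym, gyp, xx, yy]
    linear_combination
      (-((1 + MvPolynomial.X 0 * MvPolynomial.X 1) * ((PP h) ^ 2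
          + ((1 - MvPolynomial.X 0) * (1 + MvPolynomial.X 0)
            * ((1 - MvPolynomial.X 1) * (1 + MvPolynomial.X 1))) * (QQ h) ^ 2)
        + ((1 - MvPolynomial.X 0) * (1 + MvPolynomial.X 0)
            * ((1 - MvPolynomial.X 1) * (1 + MvPolynomial.X 1)))
          * (2 * (PP h * QQ h)))) * two_mul_C_half
  rw [hid]
  refine biPre1_add
    (biPre1_single _ _ (isSumSq_half_sq _) ?_ ?_)
    (biPre1_single _ _ (isSumSq_half_sq _) ?_ ?_)
  · rw [prodJmm]
    exact dmul (le_trans (degreeOf_C_mul_le _ _ _) (dsq (dadd ((PP_deg h 0).trans_eq (zero_add _).symm)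
      (dof_G_mul_QQ h 0 0 _ dof_pp0)) (le_refl _))) dof_mm0 (by omega)
  · rw [prodJmm]
    exact dmul (le_trans (degreeOf_C_mul_le _ _ _) (dsq (dadd ((PP_deg h 1).trans_eq (zero_add _).symm)
      (dof_G_mul_QQ h 1 0 _ dof_pp1)) (le_refl _))) dof_mm1 (by omega)
  · rw [prodJpp]
    exact dmul (le_trans (degreeOf_C_mul_le _ _ _) (dsq (dadd ((PP_deg h 0).trans_eq (zero_add _).symm)
      (dof_G_mul_QQ h 0 0 _ dof_mm0)) (le_refl _))) dof_pp0 (by omega)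
  · rw [prodJpp]
    exact dmul (le_trans (degreeOf_C_mul_le _ _ _) (dsq (dadd ((PP_deg h 1).trans_eq (zero_add _).symm)
      (dof_G_mul_QQ h 1 0 _ dof_mm1)) (le_refl _))) dof_pp1 (by omega)

lemma case01 (r : ℕ) (h : ℝ[X]) (hr : 2 * h.natDegree + 2 ≤ r) :
    PP (h * h * ((1 - Polynomial.X) * (1 + Polynomial.X))) ∈ biPre1 r r := by
  have hE : PP (h * h * ((1 - Polynomial.X) * (1 + Polynomial.X)))
      = ((1 - uu) * (1 + uu) - dd) * ((PP h) ^ 2 + dd * (QQ h) ^ 2)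
        + dd * (2 * (PP h * QQ h)) * (-(2 * uu)) := by
    rw [PP_mul, PP_mul h h, QQ_mul h h, PP_mul (1 - Polynomial.X), QQ_mul (1 - Polynomial.X),
      PP_sub, QQ_sub, PP_add, QQ_add, PP_one, QQ_one, PP_X, QQ_X]
    ring
  have hid : PP (h * h * ((1 - Polynomial.X) * (1 + Polynomial.X)))
      = (xx * PP h - gxm * gxp * yy * QQ h) ^ 2 * ∏ v ∈ Jy, pmGen v
        + (yy * PP h - gym * gyp * xx * QQ h) ^ 2 * ∏ v ∈ Jx, pmGen v := by
    rw [hE, prodJy, prodJx]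
    simp only [dd, uu, gxm, gxp, gym, gyp, xx, yy]
    ring
  rw [hid]
  have hGx0 : degreeOf 0 (gxm * gxp * yy) ≤ 1 + 1 :=
    dmul (dmul dof_gxm0 dof_gxp0 (le_refl 2)) (le_of_eq dof_yy0) (by omega)
  have hGx1 : degreeOf 1 (gxm * gxp * yy) ≤ 0 + 1 :=
    dmul (dmul dof_gxm1 dof_gxp1 (le_refl 0)) (dof_yy 1) (by omega)
  have hGy0 : degreeOf 0 (gym * gyp * xx) ≤ 0 + 1 :=
    dmul (dmul dof_gym0 dof_gyp0 (le_refl 0)) (dof_xx 0) (by omega)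
  have hGy1 : degreeOf 1 (gym * gyp * xx) ≤ 1 + 1 :=
    dmul (dmul dof_gym1 dof_gyp1 (le_refl 2)) (le_of_eq dof_xx1) (by omega)
  refine biPre1_add
    (biPre1_single _ _ (isSumSq_sq _) ?_ ?_)
    (biPre1_single _ _ (isSumSq_sq _) ?_ ?_)
  · rw [prodJy]
    refine dmul (dsq (dsub (show degreeOf 0 (xx * PP h) ≤ 1 + h.natDegree from
        dmul (dof_xx 0) (PP_deg h 0) (le_refl _))
      (dof_G_mul_QQ h 0 1 _ hGx0)) (le_refl _))
      (dmul dof_gym0 dof_gyp0 (le_refl 0)) (by omega)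
  · rw [prodJy]
    refine dmul (dsq (dsub (show degreeOf 1 (xx * PP h) ≤ 0 + h.natDegree from
        dmul (le_of_eq dof_xx1) (PP_deg h 1) (le_refl _))
      (dof_G_mul_QQ h 1 0 _ hGx1)) (le_refl _))
      (dmul dof_gym1 dof_gyp1 (le_refl 2)) (by omega)
  · rw [prodJx]
    refine dmul (dsq (dsub (show degreeOf 0 (yy * PP h) ≤ 0 + h.natDegree from
        dmul (le_of_eq dof_yy0) (PP_deg h 0) (le_refl _))
      (dof_G_mul_QQ h 0 0 _ hGy0)) (le_refl _))
      (dmul dof_gxm0 dof_gxp0 (le_refl 2)) (by omega)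
  · rw [prodJx]
    refine dmul (dsq (dsub (show degreeOf 1 (yy * PP h) ≤ 1 + h.natDegree from
        dmul (dof_yy 1) (PP_deg h 1) (le_refl _))
      (dof_G_mul_QQ h 1 1 _ hGy1)) (le_refl _))
      (dmul dof_gxm1 dof_gxp1 (le_refl 0)) (by omega)

end CK
end CK6

noncomputable section CK7
namespace CK

lemma PP_sum {α : Type*} (t : Finset α) (f : α → ℝ[X]) :
    PP (∑ a ∈ t, f a) = ∑ a ∈ t, PP (f a) := by
  classical
  induction t using Finset.induction_on with
  | empty => simpa using PP_zero
  | insert a t' hni ih =>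
      rw [Finset.sum_insert hni, Finset.sum_insert hni, PP_add, ih]

lemma isSumSq_mul_self (a : R2) : IsSumSq (a * a) := by
  simpa using IsSumSq.sq_add a 0 IsSumSq.zero

lemma isSumSq_mul_self' (a : ℝ[X]) : IsSumSq (a * a) := by
  simpa using IsSumSq.sq_add a 0 IsSumSq.zero

lemma sosCase (r : ℕ) (GG : ℝ[X]) (kk : ℕ) (hdeg : GG.natDegree = kk) (hGG : GG ≠ 0)
    (hcert : ∀ h : ℝ[X], 2 * h.natDegree + kk ≤ r → PP (h * h * GG) ∈ biPre1 r r) :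
    ∀ σ : ℝ[X], IsSumSq σ → (σ * GG).natDegree ≤ r → PP (σ * GG) ∈ biPre1 r r := by
  intro σ hσ
  induction hσ with
  | zero => intro _; rw [zero_mul, PP_zero]; exact biPre1_zero r r
  | @sq_add a S hS ih =>
      intro hd
      by_cases ha : a = 0
      · subst ha
        rw [show (0 : ℝ[X]) * 0 + S = S by ring] at hd ⊢
        exact ih hd
      · have hne : a * a + S ≠ 0 := fun h0 => ha (sos_sq_add_eq_zero hS h0).1
        have hdeg2 : (a * a + S).natDegree + kk ≤ r := by
          rw [← hdeg, ← Polynomial.natDegree_mul hne hGG]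
          exact hd
        have haa : IsSumSq (a * a) := isSumSq_mul_self' a
        have h1 : 2 * a.natDegree + kk ≤ r := by
          have e1 : (a * a).natDegree = 2 * a.natDegree := by
            rw [Polynomial.natDegree_mul ha ha]; ring
          have e2 := sos_natDegree_left haa hS
          omega
        have h2 : (S * GG).natDegree ≤ r := by
          refine le_trans (Polynomial.natDegree_mul_le) ?_
          have e2 := sos_natDegree_right haa hS
          omega
        rw [show (a * a + S) * GG = a * a * GG + S * GG by ring, PP_add]
        exact biPre1_add (hcert a h1) (ih h2)

lemma finsetFin2cases : ∀ I : Finset (Fin 2),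
    I = ∅ ∨ I = {0} ∨ I = {1} ∨ I = Finset.univ := by decide

lemma one_sub_X_ne : (1 - Polynomial.X : ℝ[X]) ≠ 0 := by
  intro h
  have := congrArg (Polynomial.eval 0) h
  simp at this

lemma one_add_X_ne : (1 + Polynomial.X : ℝ[X]) ≠ 0 := by
  intro h
  have := congrArg (Polynomial.eval 0) h
  simp at this

lemma one_sub_X_deg : (1 - Polynomial.X : ℝ[X]).natDegree = 1 := by
  rw [show (1 - Polynomial.X : ℝ[X]) = -(Polynomial.X - Polynomial.C 1) by rw [Polynomial.C_1]; ring,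
    Polynomial.natDegree_neg, Polynomial.natDegree_X_sub_C]

lemma one_add_X_deg : (1 + Polynomial.X : ℝ[X]).natDegree = 1 := by
  rw [show (1 + Polynomial.X : ℝ[X]) = Polynomial.X + Polynomial.C 1 by rw [Polynomial.C_1]; ring,
    Polynomial.natDegree_X_add_C]

end CK
end CK7

/-- If `p = ∑_{k=0}^r p_k T_k ∈ 𝒯(1−t, 1+t)_r`, then the kernel
`K_p(x,y) = ∑_{k=0}^r p_k T_k(x) T_k(y)` belongs to `𝒯(1±x; 1±y)_{r,r}`. -/
theorem kernel_of_truncPre_mem_biPre (r : ℕ) (p : Polynomial ℝ) (c : ℕ →₀ ℝ)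
    (hsupp : ∀ k ∈ c.support, k ≤ r)
    (hc : p = c.sum fun k a => a • Polynomial.Chebyshev.T ℝ k)
    (hp : p ∈ truncPreUniv ![1 - Polynomial.X, 1 + Polynomial.X] r) :
    chebKernel c ∈ biPre1 r r := by
  classical
  obtain ⟨s, hsos, hdegs, hsum⟩ := hp
  have hker : chebKernel c = CK.PP p := by
    rw [hc, chebKernel, Finsupp.sum, Finsupp.sum, CK.PP_sum]
    refine Finset.sum_congr rfl fun k _ => ?_
    rw [CK.PP_smul, (CK.cheb k).1, CK.tx, CK.ty, CK.xx, CK.yy]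
  rw [hker, hsum, CK.PP_sum]
  refine CK.biPre1_sum _ _ fun I _ => ?_
  rcases CK.finsetFin2cases I with rfl | rfl | rfl | rfl
  · rw [Finset.prod_empty]
    refine CK.sosCase r 1 0 (by simp) one_ne_zero (fun h hh => ?_) _ (hsos ∅) ?_
    · rw [mul_one]; exact CK.caseEmpty r h (by omega)
    · simpa using hdegs ∅
  · rw [Finset.prod_singleton, Matrix.cons_val_zero]
    refine CK.sosCase r (1 - Polynomial.X) 1 CK.one_sub_X_deg CK.one_sub_X_ne
      (fun h hh => CK.case0 r h (by omega)) _ (hsos {0}) ?_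
    simpa using hdegs {0}
  · rw [Finset.prod_singleton, Matrix.cons_val_one, Matrix.cons_val_zero]
    refine CK.sosCase r (1 + Polynomial.X) 1 CK.one_add_X_deg CK.one_add_X_ne
      (fun h hh => CK.case1 r h (by omega)) _ (hsos {1}) ?_
    simpa using hdegs {1}
  · rw [Fin.prod_univ_two, Matrix.cons_val_zero, Matrix.cons_val_one, Matrix.cons_val_zero]
    refine CK.sosCase r ((1 - Polynomial.X) * (1 + Polynomial.X)) 2
      (by rw [Polynomial.natDegree_mul CK.one_sub_X_ne CK.one_add_X_ne,
        CK.one_sub_X_deg, CK.one_add_X_deg])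
      (mul_ne_zero CK.one_sub_X_ne CK.one_add_X_ne)
      (fun h hh => CK.case01 r h (by omega)) _ (hsos Finset.univ) ?_
    simpa using hdegs Finset.univ
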